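/- Let P₃ be a 3-qubit unitary with P₃† X₃ P₃ = σ_x⊗I₄, P₃† Y₃ P₃ = -σ_y⊗I₄, P₃† Z₃ P₃ = σ_z⊗I₄, and let ℰ(ρ) = p₀ρ + p₁X₃ρX₃† + p₂Y₃ρY₃† + p₃Z₃ρZ₃†. Then for all σ ∈ M₂(ℂ) and ρ ∈ M₄(ℂ): P₃† ℰ(P₃(σ⊗ρ)P₃†) P₃ = (p₀σ + p₁σ_xσσ_x† + p₂σ_yσσ_y† + p₃σ_zσσ_z†) ⊗ ρ. -/
import Mathlib


open Matrix

noncomputable def sx : Matrix (Fin 2) (Fin 2) ℂ := !![0, 1; 1, 0]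
noncomputable def sy : Matrix (Fin 2) (Fin 2) ℂ := !![0, -Complex.I; Complex.I, 0]
noncomputable def sz : Matrix (Fin 2) (Fin 2) ℂ := !![1, 0; 0, -1]

/-- Kronecker product of square matrices indexed by `Fin m`, `Fin n`, as a matrix indexed by
`Fin (m * n)`; the first factor is the most significant part of the index. -/
noncomputable def kronF {m n : ℕ} (A : Matrix (Fin m) (Fin m) ℂ)
    (B : Matrix (Fin n) (Fin n) ℂ) : Matrix (Fin (m * n)) (Fin (m * n)) ℂ :=
  Matrix.reindex finProdFinEquiv finProdFinEquiv (Matrix.kroneckerMap (· * ·) A B)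

/-- Cast a square matrix along an equality of sizes. -/
noncomputable def castM {a b : ℕ} (h : a = b) (A : Matrix (Fin a) (Fin a) ℂ) :
    Matrix (Fin b) (Fin b) ℂ :=
  Matrix.reindex (finCongr h) (finCongr h) A

/-- The CNOT gate on 3 qubits `|q₂q₁q₀⟩` (index `4q₂+2q₁+q₀`) where qubit `c` controls
qubit `t`: bit `t` of the basis state is flipped iff bit `c` equals 1. -/
noncomputable def cnot3 (c t : ℕ) : Matrix (Fin 8) (Fin 8) ℂ :=
  Matrix.of fun r s =>
    if r.val = (if Nat.testBit s.val c then s.val ^^^ 2 ^ t else s.val) then 1 else 0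

noncomputable def P3 : Matrix (Fin 8) (Fin 8) ℂ := cnot3 1 0 * cnot3 0 2 * cnot3 2 1

noncomputable def X3 : Matrix (Fin 8) (Fin 8) ℂ :=
  castM (by norm_num) (kronF sx (kronF sx sx))
noncomputable def Y3 : Matrix (Fin 8) (Fin 8) ℂ :=
  castM (by norm_num) (kronF sy (kronF sy sy))
noncomputable def Z3 : Matrix (Fin 8) (Fin 8) ℂ :=
  castM (by norm_num) (kronF sz (kronF sz sz))


section aux
variable {a b m n : ℕ}

lemma castM_mul (h : a = b) (A B : Matrix (Fin a) (Fin a) ℂ) :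
    castM h A * castM h B = castM h (A * B) := by
  simp [castM, Matrix.reindex_apply, Matrix.submatrix_mul_equiv]

lemma castM_conjTranspose (h : a = b) (A : Matrix (Fin a) (Fin a) ℂ) :
    (castM h A)ᴴ = castM h Aᴴ := by
  simp [castM, Matrix.reindex_apply, Matrix.conjTranspose_submatrix]

lemma kronF_conjTranspose (A : Matrix (Fin m) (Fin m) ℂ) (B : Matrix (Fin n) (Fin n) ℂ) :
    (kronF A B)ᴴ = kronF Aᴴ Bᴴ := by
  simp only [kronF, Matrix.reindex_apply, Matrix.conjTranspose_submatrix]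
  ext i j
  simp [Matrix.conjTranspose_apply, Matrix.kroneckerMap, mul_comm]

lemma kronF_mul (A C : Matrix (Fin m) (Fin m) ℂ) (B D : Matrix (Fin n) (Fin n) ℂ) :
    kronF A B * kronF C D = kronF (A * C) (B * D) := by
  simp only [kronF, Matrix.reindex_apply, Matrix.submatrix_mul_equiv]
  rw [Matrix.mul_kronecker_mul]

lemma kronF_smul (c : ℂ) (A : Matrix (Fin m) (Fin m) ℂ) (B : Matrix (Fin n) (Fin n) ℂ) :
    kronF (c • A) B = c • kronF A B := by
  simp only [kronF]
  rw [Matrix.smul_kronecker]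
  rfl

lemma kronF_add (A C : Matrix (Fin m) (Fin m) ℂ) (B : Matrix (Fin n) (Fin n) ℂ) :
    kronF (A + C) B = kronF A B + kronF C B := by
  simp only [kronF]
  rw [Matrix.add_kronecker]
  rfl

lemma castM_smul (h : a = b) (c : ℂ) (A : Matrix (Fin a) (Fin a) ℂ) :
    castM h (c • A) = c • castM h A := rfl

lemma castM_add (h : a = b) (A B : Matrix (Fin a) (Fin a) ℂ) :
    castM h (A + B) = castM h A + castM h B := rfl

lemma conj_help (P M K : Matrix (Fin 8) (Fin 8) ℂ) :
    Pᴴ * (M * (P * K * Pᴴ) * Mᴴ) * P = (Pᴴ * M * P) * K * (Pᴴ * M * P)ᴴ := by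
  simp only [Matrix.conjTranspose_mul, Matrix.conjTranspose_conjTranspose, Matrix.mul_assoc]
end aux

theorem decoding_three_qubit (P : Matrix (Fin 8) (Fin 8) ℂ)
    (hP : P ∈ Matrix.unitaryGroup (Fin 8) ℂ)
    (hX : Pᴴ * X3 * P = castM (by norm_num) (kronF sx (1 : Matrix (Fin 4) (Fin 4) ℂ)))
    (hY : Pᴴ * Y3 * P = -castM (by norm_num) (kronF sy (1 : Matrix (Fin 4) (Fin 4) ℂ)))
    (hZ : Pᴴ * Z3 * P = castM (by norm_num) (kronF sz (1 : Matrix (Fin 4) (Fin 4) ℂ)))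
    (p₀ p₁ p₂ p₃ : ℂ) (σ : Matrix (Fin 2) (Fin 2) ℂ) (ρ : Matrix (Fin 4) (Fin 4) ℂ) :
    let ℰ : Matrix (Fin 8) (Fin 8) ℂ → Matrix (Fin 8) (Fin 8) ℂ := fun τ =>
      p₀ • τ + p₁ • (X3 * τ * X3ᴴ) + p₂ • (Y3 * τ * Y3ᴴ) + p₃ • (Z3 * τ * Z3ᴴ)
    Pᴴ * ℰ (P * castM (by norm_num) (kronF σ ρ) * Pᴴ) * P =
      castM (by norm_num)
        (kronF (p₀ • σ + p₁ • (sx * σ * sxᴴ) + p₂ • (sy * σ * syᴴ) + p₃ • (sz * σ * szᴴ)) ρ) := by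
  intro ℰ
  have h1 : Pᴴ * P = 1 := by
    have := Matrix.mem_unitaryGroup_iff'.mp hP
    simpa [Matrix.star_eq_conjTranspose] using this
  set K : Matrix (Fin 8) (Fin 8) ℂ := castM (by norm_num) (kronF σ ρ) with hK
  have hid : Pᴴ * (P * K * Pᴴ) * P = K := by
    calc Pᴴ * (P * K * Pᴴ) * P = (Pᴴ * P) * K * (Pᴴ * P) := by
          simp only [Matrix.mul_assoc]
      _ = K := by rw [h1]; simp
  have key : ∀ (s : Matrix (Fin 2) (Fin 2) ℂ),
      castM (by norm_num : 2 * 4 = 8) (kronF s (1 : Matrix (Fin 4) (Fin 4) ℂ)) * K *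
        (castM (by norm_num : 2 * 4 = 8) (kronF s (1 : Matrix (Fin 4) (Fin 4) ℂ)))ᴴ =
      castM (by norm_num : 2 * 4 = 8) (kronF (s * σ * sᴴ) ρ) := by
    intro s
    rw [hK, castM_conjTranspose, kronF_conjTranspose, castM_mul, castM_mul, kronF_mul, kronF_mul]
    simp
  have hXc : Pᴴ * (X3 * (P * K * Pᴴ) * X3ᴴ) * P =
      castM (by norm_num : 2 * 4 = 8) (kronF (sx * σ * sxᴴ) ρ) := by
    rw [conj_help, hX, key]
  have hYc : Pᴴ * (Y3 * (P * K * Pᴴ) * Y3ᴴ) * P =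
      castM (by norm_num : 2 * 4 = 8) (kronF (sy * σ * syᴴ) ρ) := by
    rw [conj_help, hY, ← key sy]
    simp [Matrix.neg_mul, Matrix.mul_neg]
  have hZc : Pᴴ * (Z3 * (P * K * Pᴴ) * Z3ᴴ) * P =
      castM (by norm_num : 2 * 4 = 8) (kronF (sz * σ * szᴴ) ρ) := by
    rw [conj_help, hZ, key]
  show Pᴴ * (p₀ • (P * K * Pᴴ) + p₁ • (X3 * (P * K * Pᴴ) * X3ᴴ) +
      p₂ • (Y3 * (P * K * Pᴴ) * Y3ᴴ) + p₃ • (Z3 * (P * K * Pᴴ) * Z3ᴴ)) * P = _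
  simp only [Matrix.mul_add, Matrix.add_mul, Matrix.mul_smul, Matrix.smul_mul]
  rw [hid, hXc, hYc, hZc, kronF_add, kronF_add, kronF_add, castM_add, castM_add, castM_add,
    kronF_smul, kronF_smul, kronF_smul, kronF_smul,
    castM_smul, castM_smul, castM_smul, castM_smul]
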